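/- arXiv:1008.0699 — 12 statements merged into one kernel-verified Lean document; each statement's English description precedes it below -/
import Mathlib

section
/- For a finite loop Q, the identity element 1 belongs to P^2(Q), the set of elements expressible as a product (with some order and association) containing each element of Q exactly twice. -/
/-- A loop: a magma with two-sided identity in which all left and right
translations are bijections. -/
class Loop (Q : Type*) extends Mul Q, One Q where
  one_mul : ∀ a : Q, 1 * a = a
  mul_one : ∀ a : Q, a * 1 = a
  mulLeft_bijective : ∀ a : Q, Function.Bijective fun x : Q => a * x
  mulRight_bijective : ∀ a : Q, Function.Bijective fun x : Q => x * a

/-- `IsProdOf s x` means `x` can be written as a product, under some ordering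
and association, whose multiset of factors is exactly `s`. -/
inductive IsProdOf {Q : Type*} [Mul Q] : Multiset Q → Q → Prop
  | single (a : Q) : IsProdOf {a} a
  | mul {s t : Multiset Q} {a b : Q} :
      IsProdOf s a → IsProdOf t b → IsProdOf (s + t) (a * b)

/-- `fullProds Q k` is `P^k(Q)`: elements expressible as a product (in some
order and association) containing each element of `Q` exactly `k` times. -/
def fullProds (Q : Type*) [Mul Q] [Fintype Q] (k : ℕ) : Set Q :=
  {x | IsProdOf (k • (Finset.univ : Finset Q).val) x}

/-- The smallest congruence on `Q` whose quotient is a group; its class of `1`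
is the associator subloop `A(Q)`, and its classes are the cosets of `A(Q)`. -/
def assocRel {Q : Type*} [Mul Q] (x y : Q) : Prop :=
  ∀ r : Q → Q → Prop, Equivalence r →
    (∀ a b c d, r a b → r c d → r (a * c) (b * d)) →
    (∀ a b c, r ((a * b) * c) (a * (b * c))) →
    r x y

/-- The smallest congruence on `Q` whose quotient is an abelian group; its
class of `1` is the derived subloop `Q'`, and its classes are the cosets of `Q'`. -/
def commRel {Q : Type*} [Mul Q] (x y : Q) : Prop :=
  ∀ r : Q → Q → Prop, Equivalence r →
    (∀ a b c d, r a b → r c d → r (a * c) (b * d)) →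
    (∀ a b c, r ((a * b) * c) (a * (b * c))) →
    (∀ a b, r (a * b) (b * a)) →
    r x y

/-- Product of blocks that each multiply to `1` is `1`, for a nonempty list of blocks. -/
lemma prod_ones {Q : Type*} [Loop Q] (f : Q → Multiset Q) :
    ∀ l : List Q, l ≠ [] → (∀ a ∈ l, IsProdOf (f a) 1) →
      IsProdOf ((l.map f).sum) (1 : Q) := by
  intro l
  induction l with
  | nil => intro h; exact absurd rfl h
  | cons a l ih =>
    intro _ hall
    cases l with
    | nil =>
      simpa using hall a (by simp)
    | cons b l =>
      have h1 : IsProdOf (f a) (1 : Q) := hall a (by simp)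
      have h2 : IsProdOf (((b :: l).map f).sum) (1 : Q) :=
        ih (by simp) (fun x hx => hall x (by simp [hx]))
      have := IsProdOf.mul h1 h2
      rw [Loop.mul_one] at this
      simpa using this

theorem one_mem_fullProds_two (Q : Type*) [Loop Q] [Fintype Q] :
    (1 : Q) ∈ fullProds Q 2 := by
  classical
  -- right inverse map
  have hex : ∀ a : Q, ∃ b, a * b = 1 := fun a => (Loop.mulLeft_bijective a).surjective 1
  choose ρ hρ using hex
  have hinj : Function.Injective ρ := by
    intro a b hab
    have := (Loop.mulRight_bijective (ρ a)).injective (a₁ := a) (a₂ := b)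
    apply this
    show a * ρ a = b * ρ a
    rw [hρ a, hab, hρ b]
  have hbij : Function.Bijective ρ := Finite.injective_iff_bijective.mp hinj
  let e : Q ≃ Q := Equiv.ofBijective ρ hbij
  set f : Q → Multiset Q := fun a => {a} + {ρ a} with hf
  have key : ∀ a : Q, IsProdOf (f a) (1 : Q) := by
    intro a
    have := IsProdOf.mul (IsProdOf.single a) (IsProdOf.single (ρ a))
    rw [hρ a] at this
    exact this
  have hne : (Finset.univ : Finset Q).toList ≠ [] := by
    simp [Finset.toList_eq_nil]
    exact Finset.univ_nonempty.ne_empty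
  have hmain := prod_ones f (Finset.univ : Finset Q).toList hne
    (fun a _ => key a)
  have hmape : Multiset.map ρ (Finset.univ : Finset Q).val = (Finset.univ : Finset Q).val := by
    have h := congrArg Finset.val (Finset.map_univ_equiv e)
    rw [Finset.map_val] at h
    exact h
  have hsum : (((Finset.univ : Finset Q).toList.map f).sum : Multiset Q)
      = 2 • (Finset.univ : Finset Q).val := by
    have h1 : (((Finset.univ : Finset Q).toList.map f).sum : Multiset Q)
        = ((Finset.univ : Finset Q).val.map f).sum := by
      rw [← Finset.coe_toList (Finset.univ : Finset Q)]
      simp [Multiset.sum_coe]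
    rw [h1, hf, Multiset.sum_map_add]
    have hs2 : ((Finset.univ : Finset Q).val.map fun a => ({ρ a} : Multiset Q)).sum
        = (Finset.univ : Finset Q).val := by
      have : ((Finset.univ : Finset Q).val.map fun a => ({ρ a} : Multiset Q))
          = ((Finset.univ : Finset Q).val.map ρ).map fun b => ({b} : Multiset Q) := by
        rw [Multiset.map_map]; rfl
      rw [this, hmape, Multiset.sum_map_singleton]
    rw [hs2, Multiset.sum_map_singleton, two_nsmul]
  rw [hsum] at hmain
  exact hmain
end

section
/- For a finite loop Q and k ≥ 1, |P^k(Q)| ≤ |P^{k+1}(Q)|. -/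
lemma exists_isProdOf {Q : Type*} [Mul Q] (s : Multiset Q) (hs : s ≠ 0) :
    ∃ x, IsProdOf s x := by
  induction s using Multiset.induction with
  | empty => exact absurd rfl hs
  | cons a t ih =>
    rcases eq_or_ne t 0 with rfl | ht
    · exact ⟨a, IsProdOf.single a⟩
    · obtain ⟨x, hx⟩ := ih ht
      refine ⟨a * x, ?_⟩
      have := IsProdOf.mul (IsProdOf.single a) hx
      simpa using this

theorem fullProds_card_mono (Q : Type*) [Loop Q] [Fintype Q] (k : ℕ) (hk : 1 ≤ k) :
    (fullProds Q k).ncard ≤ (fullProds Q (k + 1)).ncard := by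
  classical
  have hQ : Nonempty Q := ⟨1⟩
  have hu : (Finset.univ : Finset Q).val ≠ 0 := by
    simp [Finset.val_eq_zero, Finset.univ_eq_empty_iff]
  obtain ⟨p, hp⟩ := exists_isProdOf (Finset.univ : Finset Q).val hu
  apply Set.ncard_le_ncard_of_injOn (fun x => x * p)
  · intro x hx
    have : IsProdOf (k • (Finset.univ : Finset Q).val + (Finset.univ : Finset Q).val) (x * p) :=
      IsProdOf.mul hx hp
    simpa [fullProds, succ_nsmul] using this
  · exact Set.injOn_of_injective ((Loop.mulRight_bijective p).injective)
end

section
/- For a finite loop Q and k ≥ 1, P^k(Q) ⊆ P^{k+2}(Q). -/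
/-!
Each `a` has a right inverse `rinv a`, with `a * rinv a = 1`; right cancellation makes `rinv`
injective, hence a permutation of the finite loop. So the products `a * rinv a = 1`, over all
`a`, together use every element exactly twice, and multiplying a product representing
`x ∈ P^k(Q)` on the right by them one at a time keeps its value `x`.
-/

section RightInverse

variable {Q : Type*} [Loop Q]

noncomputable def rinv (a : Q) : Q :=
  (Equiv.ofBijective _ (Loop.mulLeft_bijective a)).symm 1

lemma mul_rinv (a : Q) : a * rinv a = 1 :=
  (Equiv.ofBijective _ (Loop.mulLeft_bijective a)).apply_symm_apply 1

lemma rinv_injective : Function.Injective (rinv (Q := Q)) := fun a b h =>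
  (Loop.mulRight_bijective (rinv a)).injective <| by rw [mul_rinv, h, mul_rinv]

lemma rinv_bijective [Finite Q] : Function.Bijective (rinv (Q := Q)) :=
  Finite.injective_iff_bijective.mp rinv_injective

lemma IsProdOf.add_add_map_rinv {s : Multiset Q} {x : Q}
    (hx : IsProdOf s x) (t : Multiset Q) : IsProdOf (s + (t + t.map rinv)) x := by
  induction t using Multiset.induction with
  | empty => simpa using hx
  | cons a t ih =>
    have hpair : IsProdOf ({a} + {rinv a}) 1 := mul_rinv a ▸ .mul (.single a) (.single _)
    have hprod := ih.mul hpair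
    rw [Loop.mul_one] at hprod
    convert hprod using 1
    simp only [← Multiset.singleton_add, Multiset.map_add, Multiset.map_singleton]
    abel

end RightInverse

theorem fullProds_subset_fullProds_add_two_general (Q : Type*) [Loop Q] [Fintype Q]
    (k : ℕ) :
    fullProds Q k ⊆ fullProds Q (k + 2) := by
  intro x hx
  have hperm : (Finset.univ : Finset Q).val.map rinv = Finset.univ.val :=
    Multiset.map_univ_val_equiv (Equiv.ofBijective _ rinv_bijective)
  have hsplit : (k + 2) • (Finset.univ : Finset Q).val
      = k • Finset.univ.val + (Finset.univ.val + Finset.univ.val.map rinv) := by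
    rw [hperm, add_smul, two_smul]
  simpa only [fullProds, Set.mem_ofPred_eq, hsplit] using hx.add_add_map_rinv Finset.univ.val

theorem fullProds_subset_fullProds_add_two (Q : Type*) [Loop Q] [Fintype Q]
    (k : ℕ) (hk : 1 ≤ k) :
    fullProds Q k ⊆ fullProds Q (k + 2) :=
  fullProds_subset_fullProds_add_two_general Q k
end

section
/- For a finite loop Q, P^2(Q) is contained in the derived subloop Q'. -/
theorem IsProdOf.map_eq_prod {Q M : Type*} [Mul Q] [CommMonoid M] (f : Q →ₙ* M)
    {s : Multiset Q} {x : Q} (h : IsProdOf s x) : f x = (s.map f).prod := by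
  induction h with
  | single a => simp
  | mul _ _ ih₁ ih₂ => rw [map_mul, ih₁, ih₂, Multiset.map_add, Multiset.prod_add]

namespace Loop

variable {Q : Type*}

def commCon (Q : Type*) [Mul Q] : Con Q where
  r := commRel
  iseqv :=
    { refl := fun x _ hr _ _ _ => hr.refl x
      symm := fun h r hr hmul hassoc hcomm => hr.symm (h r hr hmul hassoc hcomm)
      trans := fun h₁ h₂ r hr hmul hassoc hcomm =>
        hr.trans (h₁ r hr hmul hassoc hcomm) (h₂ r hr hmul hassoc hcomm) }
  mul' h₁ h₂ r hr hmul hassoc hcomm :=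
    hmul _ _ _ _ (h₁ r hr hmul hassoc hcomm) (h₂ r hr hmul hassoc hcomm)

variable [Loop Q]

instance : CommMonoid (commCon Q).Quotient where
  mul_assoc a b c := Con.induction_on₂ a b fun a b => Con.induction_on c fun c =>
    (commCon Q).eq.2 fun _ _ _ hassoc _ => hassoc a b c
  mul_comm a b := Con.induction_on₂ a b fun a b =>
    (commCon Q).eq.2 fun _ _ _ _ hcomm => hcomm a b
  one_mul a := Con.induction_on a fun a => congrArg _ (Loop.one_mul a)
  mul_one a := Con.induction_on a fun a => congrArg _ (Loop.mul_one a)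

noncomputable def rightInv (a : Q) : Q :=
  Function.surjInv (mulLeft_bijective a).surjective 1

theorem mul_rightInv (a : Q) : a * rightInv a = 1 :=
  Function.surjInv_eq (mulLeft_bijective _).surjective 1

theorem rightInv_injective : Function.Injective (rightInv : Q → Q) := fun a b h =>
  (mulRight_bijective (rightInv a)).injective <| by
    rw [mul_rightInv, h, mul_rightInv]

theorem prod_sq_eq_one [Fintype Q] {M : Type*} [CommMonoid M] (f : Q →ₙ* M) (hf : f 1 = 1) :
    (∏ y, f y) ^ 2 = 1 := by
  have hperm : ∏ y, f (rightInv y) = ∏ y, f y :=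
    Fintype.prod_bijective _ (Finite.injective_iff_bijective.1 rightInv_injective) _ _
      fun _ => rfl
  calc (∏ y, f y) ^ 2 = (∏ y, f y) * ∏ y, f (rightInv y) := by rw [sq, hperm]
    _ = ∏ y, f (y * rightInv y) := by simp only [map_mul, Finset.prod_mul_distrib]
    _ = 1 := by simp only [mul_rightInv, hf, Finset.prod_const_one]

end Loop

theorem fullProds_two_subset_derived (Q : Type*) [Loop Q] [Fintype Q] :
    ∀ x ∈ fullProds Q 2, commRel x 1 := by
  intro x hx
  refine (Loop.commCon Q).eq.1 ?_
  change (Loop.commCon Q).mkMulHom x = (Loop.commCon Q).mkMulHom 1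
  rw [hx.map_eq_prod, two_nsmul, Multiset.map_add, Multiset.prod_add, ← sq]
  exact Loop.prod_sq_eq_one _ rfl
end

section
/- For a finite loop Q, P(Q) is contained in a coset aQ' where a² ∈ Q'; equivalently, the coset of Q' containing P(Q) is an element of order at most 2 in the abelian group Q/Q'. -/
namespace LoopProofAux

variable {Q : Type*} [Loop Q]

theorem crefl (x : Q) : commRel x x := fun _ he _ _ _ => he.refl x

theorem csymm {x y : Q} (h : commRel x y) : commRel y x :=
  fun r he hm ha hc => he.symm (h r he hm ha hc)

theorem ctrans {x y z : Q} (h1 : commRel x y) (h2 : commRel y z) : commRel x z :=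
  fun r he hm ha hc => he.trans (h1 r he hm ha hc) (h2 r he hm ha hc)

theorem cmul {a b c d : Q} (h1 : commRel a b) (h2 : commRel c d) :
    commRel (a * c) (b * d) :=
  fun r he hm ha hc => hm _ _ _ _ (h1 r he hm ha hc) (h2 r he hm ha hc)

theorem cassoc (a b c : Q) : commRel ((a * b) * c) (a * (b * c)) :=
  fun _ _ _ ha _ => ha a b c

theorem ccomm (a b : Q) : commRel (a * b) (b * a) := fun _ _ _ _ hc => hc a b

/-- Fold a list by multiplication. -/
def fr (l : List Q) : Q := l.foldr (· * ·) 1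

@[simp] theorem fr_nil : fr ([] : List Q) = 1 := rfl
@[simp] theorem fr_cons (a : Q) (l : List Q) : fr (a :: l) = a * fr l := rfl

theorem fr_perm {l l' : List Q} (h : l.Perm l') : commRel (fr l) (fr l') := by
  induction h with
  | nil => exact crefl _
  | cons a _ ih => exact cmul (crefl a) ih
  | swap a b l =>
      exact ctrans (csymm (cassoc b a (fr l)))
        (ctrans (cmul (ccomm b a) (crefl (fr l))) (cassoc a b (fr l)))
  | trans _ _ ih1 ih2 => exact ctrans ih1 ih2

theorem fr_append (l l' : List Q) : commRel (fr (l ++ l')) (fr l * fr l') := by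
  induction l with
  | nil => simpa [Loop.one_mul] using crefl (fr l')
  | cons a l ih =>
      simp only [List.cons_append, fr_cons]
      exact ctrans (cmul (crefl a) ih) (csymm (cassoc a (fr l) (fr l')))

theorem isProdOf_commRel_fr {s : Multiset Q} {x : Q}
    (h : IsProdOf s x) : commRel x (fr s.toList) := by
  induction h with
  | single a =>
      have hp : ([a] : List Q).Perm ({a} : Multiset Q).toList := by
        rw [← Multiset.coe_eq_coe, Multiset.coe_toList, Multiset.coe_singleton]
      have : commRel (fr [a]) (fr ({a} : Multiset Q).toList) := fr_perm hp
      simpa [Loop.mul_one] using this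
  | mul h1 h2 ih1 ih2 =>
      rename_i s t a b
      have hp : (s.toList ++ t.toList).Perm (s + t).toList := by
        rw [← Multiset.coe_eq_coe, Multiset.coe_toList, ← Multiset.coe_add,
          Multiset.coe_toList, Multiset.coe_toList]
      exact ctrans (cmul ih1 ih2) (ctrans (csymm (fr_append _ _)) (fr_perm hp))

theorem exists_isProdOf (a : Q) (l : List Q) :
    ∃ x, IsProdOf (↑(a :: l) : Multiset Q) x := by
  induction l generalizing a with
  | nil => exact ⟨a, by simpa using IsProdOf.single a⟩
  | cons b l ih =>
      obtain ⟨y, hy⟩ := ih b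
      refine ⟨a * y, ?_⟩
      have := IsProdOf.mul (IsProdOf.single a) hy
      simpa [Multiset.singleton_add] using this

/-- Right inverse in a loop. -/
noncomputable def inv (a : Q) : Q := Classical.choose ((Loop.mulLeft_bijective a).2 1)

theorem mul_inv (a : Q) : a * inv a = 1 := Classical.choose_spec ((Loop.mulLeft_bijective a).2 1)

theorem inv_injective : Function.Injective (inv : Q → Q) := by
  intro a b h
  have h1 : a * inv b = 1 := by rw [← h]; exact mul_inv a
  have h2 : b * inv b = 1 := mul_inv b
  exact (Loop.mulRight_bijective (inv b)).1 (h1.trans h2.symm)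

theorem fr_mul_inv (l : List Q) : commRel (fr (l ++ l.map inv)) 1 := by
  induction l with
  | nil => exact crefl 1
  | cons a l ih =>
      have hp : ((a :: l) ++ (a :: l).map inv).Perm (a :: inv a :: (l ++ l.map inv)) := by
        simp only [List.map_cons, List.cons_append]
        exact (List.perm_middle.cons a)
      refine ctrans (fr_perm hp) ?_
      simp only [fr_cons]
      refine ctrans (csymm (cassoc a (inv a) (fr (l ++ l.map inv)))) ?_
      rw [mul_inv, Loop.one_mul]
      exact ih

end LoopProofAux


theorem fullProds_one_subset_coset_sq_derived (Q : Type*) [Loop Q] [Fintype Q] :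
    ∃ a : Q, commRel (a * a) 1 ∧ ∀ x ∈ fullProds Q 1, commRel x a := by
  classical
  open LoopProofAux in
  -- the list of all elements
  set L : List Q := (Finset.univ : Finset Q).val.toList with hL
  have hcoe : (↑L : Multiset Q) = (Finset.univ : Finset Q).val := Multiset.coe_toList _
  -- existence of a full product
  have hne : L ≠ [] := by
    intro h
    have : (1 : Q) ∈ (↑L : Multiset Q) := by
      rw [hcoe]; exact Finset.mem_univ_val 1
    rw [h] at this; simp at this
  obtain ⟨a0, l0, hl0⟩ := List.exists_cons_of_ne_nil hne
  obtain ⟨a, ha⟩ := exists_isProdOf a0 l0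
  rw [← hl0, hcoe] at ha
  refine ⟨a, ?_, ?_⟩
  · -- a * a ~ 1
    have hfr : commRel a (fr L) := by
      have h1 := isProdOf_commRel_fr ha
      rw [← hcoe] at h1
      have hp : ((↑L : Multiset Q)).toList.Perm L := by
        rw [← Multiset.coe_eq_coe, Multiset.coe_toList]
      exact ctrans h1 (fr_perm hp)
    have hinvbij : Function.Bijective (inv : Q → Q) :=
      Finite.injective_iff_bijective.mp inv_injective
    have hmapuniv : (Finset.univ : Finset Q).val.map inv = (Finset.univ : Finset Q).val := by
      have := Finset.map_univ_equiv (Equiv.ofBijective inv hinvbij)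
      calc (Finset.univ : Finset Q).val.map inv
          = ((Finset.univ : Finset Q).map ⟨inv, inv_injective⟩).val := rfl
        _ = (Finset.univ : Finset Q).val := by rw [show (Finset.univ : Finset Q).map ⟨inv, inv_injective⟩ = Finset.univ from this]
    have hperm : (L.map inv).Perm L := by
      rw [← Multiset.coe_eq_coe, ← Multiset.map_coe, hcoe, hmapuniv]
    have : commRel (a * a) (fr (L ++ L.map inv)) :=
      ctrans (cmul hfr (ctrans hfr (csymm (fr_perm hperm)))) (csymm (fr_append L (L.map inv)))
    exact ctrans this (fr_mul_inv L)
  · intro x hx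
    have hx' : IsProdOf (Finset.univ : Finset Q).val x := by
      simpa [fullProds] using hx
    exact ctrans (isProdOf_commRel_fr hx') (csymm (isProdOf_commRel_fr ha))
end

section
/- Let Q be a finite loop, N a normal subloop of Q with |N| = k, and let a₁N, …, a_kN ∈ P(Q/N). Then P(Q) intersects the coset product a₁N · a₂N ⋯ a_kN (under the association used); in particular P(Q) intersects every element of P(Q/N)^k. -/
/-- A congruence on the loop `Q`; normal subloops of `Q` are exactly the
congruence classes of `1`, and `Q/N` is the corresponding quotient. -/
structure LoopCongruence (Q : Type*) [Mul Q] where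
  r : Q → Q → Prop
  iseqv : Equivalence r
  mul_compat : ∀ a b c d, r a b → r c d → r (a * c) (b * d)

def LoopCongruence.toSetoid {Q : Type*} [Mul Q] (c : LoopCongruence Q) : Setoid Q :=
  ⟨c.r, c.iseqv⟩

instance LoopCongruence.quotMul {Q : Type*} [Mul Q] (c : LoopCongruence Q) :
    Mul (Quotient c.toSetoid) :=
  ⟨Quotient.map₂ (· * ·) fun _ _ h₁ _ _ h₂ => c.mul_compat _ _ _ _ h₁ h₂⟩

/-!
Every class of a congruence on a finite loop has `k = |N|` elements, because right translations
inject one class into another. Hence the classes of the elements of `Q`, counted with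
multiplicity, list each element of `Q/N` exactly `k` times. Substituting full products of `Q/N`
for the factors of a product of `b₁, …, b_k` gives a product in `Q/N` of this multiset, and a
product expression in `Q/N` lifts factor by factor to a product expression in `Q` of any multiset
of representatives.
-/

theorem Multiset.exists_eq_add_of_map_eq_add {α β : Type*} (f : α → β) {t : Multiset α}
    {s₁ s₂ : Multiset β} (h : t.map f = s₁ + s₂) :
    ∃ t₁ t₂, t = t₁ + t₂ ∧ t₁.map f = s₁ ∧ t₂.map f = s₂ := by
  induction s₁ using Multiset.induction_on generalizing t with
  | empty => exact ⟨0, t, by simp, by simp, by simpa using h⟩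
  | cons a s₁ ih =>
    have ha : a ∈ t.map f := h ▸ Multiset.mem_add.mpr (.inl (s₁.mem_cons_self a))
    obtain ⟨x, hx, rfl⟩ := Multiset.mem_map.mp ha
    obtain ⟨t, rfl⟩ := Multiset.exists_cons_of_mem hx
    rw [Multiset.map_cons, Multiset.cons_add, Multiset.cons_inj_right] at h
    obtain ⟨t₁, t₂, rfl, rfl, rfl⟩ := ih h
    exact ⟨x ::ₘ t₁, t₂, (Multiset.cons_add _ _ _).symm, Multiset.map_cons _ _ _, rfl⟩

namespace IsProdOf

variable {M N : Type*} [Mul M] [Mul N]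

theorem exists_lift (f : M →ₙ* N) {s : Multiset N} {v : N} (h : IsProdOf s v) :
    ∀ {t : Multiset M}, t.map f = s → ∃ x, IsProdOf t x ∧ f x = v := by
  induction h with
  | single a =>
    intro t ht
    obtain ⟨x, rfl, rfl⟩ := Multiset.map_eq_singleton.mp ht
    exact ⟨x, single x, rfl⟩
  | mul _ _ ih₁ ih₂ =>
    intro t ht
    obtain ⟨t₁, t₂, rfl, ht₁, ht₂⟩ := Multiset.exists_eq_add_of_map_eq_add f ht
    obtain ⟨x₁, hx₁, rfl⟩ := ih₁ ht₁
    obtain ⟨x₂, hx₂, rfl⟩ := ih₂ ht₂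
    exact ⟨x₁ * x₂, hx₁.mul hx₂, map_mul f x₁ x₂⟩

theorem nsmul_of_forall {s u : Multiset M} {v : M} (h : IsProdOf s v)
    (hu : ∀ a ∈ s, IsProdOf u a) : IsProdOf (Multiset.card s • u) v := by
  induction h with
  | single a => simpa using hu a (Multiset.mem_singleton_self a)
  | mul _ _ ih₁ ih₂ =>
    rw [Multiset.card_add, add_smul]
    exact (ih₁ fun a ha => hu a (Multiset.mem_add.mpr (.inl ha))).mul
      (ih₂ fun a ha => hu a (Multiset.mem_add.mpr (.inr ha)))

end IsProdOf

namespace LoopCongruence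

variable {Q : Type*}

def mkMulHom [Mul Q] (c : LoopCongruence Q) : Q →ₙ* Quotient c.toSetoid :=
  ⟨Quotient.mk _, fun _ _ => rfl⟩

variable [Loop Q] (c : LoopCongruence Q)

theorem card_class_le [Finite Q] (a d : Q) : Nat.card {x // c.r x a} ≤ Nat.card {x // c.r x d} := by
  obtain ⟨t, rfl⟩ := (Loop.mulLeft_bijective a).2 d
  refine Nat.card_le_card_of_injective
    (fun x => ⟨x.1 * t, c.mul_compat _ _ _ _ x.2 (c.iseqv.refl t)⟩) fun x y hxy =>
      Subtype.ext ((Loop.mulRight_bijective t).1 (congrArg Subtype.val hxy))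

theorem card_class_eq [Finite Q] (a d : Q) : Nat.card {x // c.r x a} = Nat.card {x // c.r x d} :=
  (c.card_class_le a d).antisymm (c.card_class_le d a)

theorem map_mk_univ [Fintype Q] [Fintype (Quotient c.toSetoid)] {k : ℕ}
    (hk : Nat.card {x // c.r x 1} = k) :
    (Finset.univ : Finset Q).val.map c.mkMulHom =
      k • (Finset.univ : Finset (Quotient c.toSetoid)).val := by
  classical
  ext C
  obtain ⟨a, rfl⟩ := Quotient.exists_rep C
  rw [Multiset.count_nsmul, Multiset.count_univ, mul_one, Multiset.count_map, ← hk,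
    ← c.card_class_eq a 1, Nat.card_eq_fintype_card, Fintype.card_subtype]
  refine congrArg Multiset.card (Multiset.filter_congr fun x _ => ?_)
  exact (Quotient.eq (r := c.toSetoid)).trans ⟨c.iseqv.symm, c.iseqv.symm⟩

end LoopCongruence

theorem fullProds_intersects_quotient_prods (Q : Type*) [Loop Q] [Fintype Q]
    (c : LoopCongruence Q) [Fintype (Quotient c.toSetoid)] (k : ℕ)
    (hcard : Nat.card {x : Q // c.r x 1} = k)
    (b : Fin k → Quotient c.toSetoid)
    (hb : ∀ i, b i ∈ fullProds (Quotient c.toSetoid) 1)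
    (v : Quotient c.toSetoid)
    (hv : IsProdOf (↑(List.ofFn b) : Multiset (Quotient c.toSetoid)) v) :
    ∃ x : Q, x ∈ fullProds Q 1 ∧ Quotient.mk c.toSetoid x = v := by
  have hv' : IsProdOf (k • (Finset.univ : Finset (Quotient c.toSetoid)).val) v := by
    simpa using hv.nsmul_of_forall fun a ha => by
      obtain ⟨i, rfl⟩ := (List.mem_ofFn' b a).mp (Multiset.mem_coe.mp ha)
      simpa [fullProds] using hb i
  obtain ⟨x, hx, rfl⟩ := hv'.exists_lift c.mkMulHom (c.map_mk_univ hcard)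
  exact ⟨x, by simpa [fullProds] using hx, rfl⟩
end

section
/- Let Q be a finite loop and let C be a nonempty column-entry regular subset of the multiplication table of Q. Then P(C_r), the set of elements expressible as a product containing each element of the multiset C_r of rows of C exactly as often as it occurs, intersects the associator subloop A(Q). -/
def assocCon (Q : Type*) [Mul Q] : Con Q where
  r := assocRel
  iseqv :=
    { refl := fun x _ hr _ _ => hr.refl x
      symm := fun h r hr hm ha => hr.symm (h r hr hm ha)
      trans := fun h₁ h₂ r hr hm ha => hr.trans (h₁ r hr hm ha) (h₂ r hr hm ha) }
  mul' := fun h₁ h₂ r hr hm ha => hm _ _ _ _ (h₁ r hr hm ha) (h₂ r hr hm ha)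

namespace assocCon

variable {Q : Type*} [Loop Q]

instance : Monoid (assocCon Q).Quotient where
  mul_assoc a b c := Con.induction_on a fun x => Con.induction_on b fun y =>
    Con.induction_on c fun z => (Con.eq _).2 fun _ _ _ ha => ha x y z
  one_mul a := Con.induction_on a fun x => congrArg _ (Loop.one_mul x)
  mul_one a := Con.induction_on a fun x => congrArg _ (Loop.mul_one x)

instance [Finite Q] : RightCancelMonoid (assocCon Q).Quotient where
  mul_right_cancel b := Con.induction_on b fun e => by
    -- right translation by `e` is onto because it is onto in `Q`, hence injective by finiteness
    have : Finite (assocCon Q).Quotient := Finite.of_surjective _ Quotient.mk''_surjective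
    refine (Finite.injective_iff_surjective.2 fun z => Con.induction_on z fun y => ?_)
    obtain ⟨x, rfl⟩ := (Loop.mulRight_bijective e).2 y
    exact ⟨x, rfl⟩

end assocCon

section Walk

variable {α M : Type*} [RightCancelMonoid M]

/-- Each `x` is an edge `col x ⟶ row x * col x` labelled `row x`; the hypothesis says these edges
form a trail from `b` to `a` plus closed walks, and `l` lists them in walk order. -/
theorem exists_list_prod_mul_eq (row col : α → M) :
    ∀ (s : Multiset α) (a b : M),
      b ::ₘ s.map (fun x => row x * col x) = a ::ₘ s.map col →
      ∃ l : List α, (l : Multiset α) = s ∧ (l.map row).prod * b = a := by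
  intro s
  induction s using Multiset.strongInductionOn with
  | ih s ih =>
  intro a b hs
  by_cases ha : a ∈ s.map (fun x => row x * col x)
  · obtain ⟨x, hx, rfl⟩ := Multiset.mem_map.1 ha
    obtain ⟨t, rfl⟩ := Multiset.exists_cons_of_mem hx
    have ht : b ::ₘ t.map (fun x => row x * col x) = col x ::ₘ t.map col := by
      rw [Multiset.map_cons, Multiset.map_cons, Multiset.cons_swap] at hs
      exact (Multiset.cons_inj_right _).1 hs
    obtain ⟨l, hl, hprod⟩ := ih t (Multiset.lt_cons_self t x) _ _ ht
    exact ⟨x :: l, by rw [← Multiset.cons_coe, hl], by simp [mul_assoc, hprod]⟩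
  · have hb : b = a := by
      have : a ∈ b ::ₘ s.map (fun x => row x * col x) := hs ▸ Multiset.mem_cons_self a _
      simpa [ha, eq_comm] using this
    subst hb
    rcases Multiset.empty_or_exists_mem s with rfl | ⟨x, hx⟩
    · exact ⟨[], rfl, by simp⟩
    obtain ⟨t, rfl⟩ := Multiset.exists_cons_of_mem hx
    have ht := (Multiset.cons_inj_right _).1 hs
    rw [Multiset.map_cons, Multiset.map_cons] at ht
    obtain ⟨l, hl, hprod⟩ := ih t (Multiset.lt_cons_self t x) _ _ ht
    have hcycle : (l.map row).prod * row x = 1 :=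
      mul_right_cancel (b := col x) (by rw [mul_assoc, hprod, one_mul])
    refine ⟨l ++ [x], ?_, by simp [hcycle]⟩
    rw [← Multiset.coe_add, hl, Multiset.coe_singleton, add_comm, Multiset.singleton_add]

theorem exists_list_prod_eq_one (row col : α → M)
    (s : Multiset α) (h : s.map (fun x => row x * col x) = s.map col) :
    ∃ l : List α, (l : Multiset α) = s ∧ (l.map row).prod = 1 := by
  simpa using exists_list_prod_mul_eq row col s 1 1 (by rw [h])

end Walk

theorem IsProdOf.exists_map_eq_prod {Q M : Type*} [Mul Q] [Monoid M] (f : Q →ₙ* M) :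
    ∀ l : List Q, l ≠ [] → ∃ x, IsProdOf (l : Multiset Q) x ∧ f x = (l.map f).prod
  | [a], _ => ⟨a, IsProdOf.single a, by simp⟩
  | a :: b :: l, _ => by
    obtain ⟨y, hy, hfy⟩ := exists_map_eq_prod f (b :: l) (List.cons_ne_nil b l)
    refine ⟨a * y, ?_, by simp [hfy]⟩
    rw [← Multiset.cons_coe, ← Multiset.singleton_add]
    exact (IsProdOf.single a).mul hy

theorem Finset.val_map_eq_of_card_filter_eq {α β : Type*} [DecidableEq β] {s : Finset α}
    {f g : α → β} (h : ∀ b, (s.filter fun x => f x = b).card = (s.filter fun x => g x = b).card) :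
    s.val.map f = s.val.map g := by
  ext b
  rw [Multiset.count_map, Multiset.count_map]
  simpa [Finset.card, Finset.filter_val, eq_comm] using h b

theorem regular_subset_full_prod_mem_associator (Q : Type*) [Loop Q] [Fintype Q]
    [DecidableEq Q] (C : Finset (Q × Q × Q))
    (hne : C.Nonempty)
    (htable : ∀ t ∈ C, t.2.2 = t.1 * t.2.1)
    (hreg : ∀ s : Q, (C.filter fun t => t.2.1 = s).card
                    = (C.filter fun t => t.2.2 = s).card) :
    ∃ x : Q, IsProdOf (C.val.map Prod.fst) x ∧ assocRel x 1 := by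
  let π := (assocCon Q).mkMulHom
  have hcycle : C.val.map (fun t => π t.1 * π t.2.1) = C.val.map (fun t => π t.2.1) := by
    calc C.val.map (fun t => π t.1 * π t.2.1) = (C.val.map (·.2.2)).map π := by
          rw [Multiset.map_map]
          exact Multiset.map_congr rfl fun t ht => by simp [htable t ht, π]
      _ = (C.val.map (·.2.1)).map π := by rw [Finset.val_map_eq_of_card_filter_eq hreg]
      _ = _ := Multiset.map_map _ _ _
  obtain ⟨l, hl, hprod⟩ := exists_list_prod_eq_one (fun t => π t.1) (fun t => π t.2.1) C.val hcycle
  have hl_ne : l.map Prod.fst ≠ [] := by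
    obtain ⟨t, ht⟩ := hne
    exact List.ne_nil_of_mem (List.mem_map_of_mem (by rwa [← Multiset.mem_coe, hl]))
  obtain ⟨x, hx, hπx⟩ := IsProdOf.exists_map_eq_prod π (l.map Prod.fst) hl_ne
  refine ⟨x, by rwa [← Multiset.map_coe, hl] at hx, (assocCon Q).eq.1 ?_⟩
  rw [List.map_map] at hπx
  exact hπx.trans hprod
end

section
/- If a finite loop Q has a k-plex in its multiplication table (or even just a regular row k-plex), then P^k(Q) intersects the associator subloop A(Q). In particular, if Q has a transversal then P(Q) ∩ A(Q) ≠ ∅. -/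
/-!
Modulo the associator subloop `A(Q)` the loop becomes a group `G`. Read every cell
`(r, c, rc)` of the plex as an edge `c → rc` of `G` labelled `r`. Since columns and entries
occur equally often, every vertex has as many outgoing as incoming edges, so the edges split
into closed walks, and along a closed walk the labels multiply to `1` in `G`. Concatenating
the walks orders the rows — each element of `Q` exactly `k` times — into a product lying in
`A(Q)`.
-/

theorem List.exists_coe_eq_cons_cons_prod_eq {M : Type*} [Monoid M] {L : List M} {a b : M}
    {s : Multiset M} (hL : (L : Multiset M) = (a * b) ::ₘ s) :
    ∃ L' : List M, (L' : Multiset M) = a ::ₘ b ::ₘ s ∧ L'.prod = L.prod := by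
  have hab : a * b ∈ L := Multiset.mem_coe.1 (hL ▸ Multiset.mem_cons_self _ _)
  obtain ⟨L₁, L₂, rfl⟩ := List.append_of_mem hab
  have hs : ((L₁ ++ L₂ : List M) : Multiset M) = s := by
    rw [← Multiset.cons_inj_right (a * b), ← hL, Multiset.cons_coe, Multiset.coe_eq_coe]
    exact List.perm_middle.symm
  refine ⟨L₁ ++ a :: b :: L₂, ?_, by simp [mul_assoc]⟩
  rw [← hs, Multiset.cons_coe, Multiset.cons_coe, Multiset.coe_eq_coe]
  exact List.perm_middle.trans (List.perm_middle.cons a)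

theorem Multiset.exists_coe_eq_of_map_eq_coe {α β : Type*} (f : α → β) :
    ∀ {s : Multiset α} {L : List β}, s.map f = L →
      ∃ l : List α, (l : Multiset α) = s ∧ l.map f = L
  | s, [], h => ⟨[], (Multiset.map_eq_zero.1 h).symm, rfl⟩
  | s, b :: L, h => by
    classical
    obtain ⟨a, ha, rfl, hL⟩ :=
      (Multiset.map_eq_cons f s L b).2 (h.trans (Multiset.cons_coe b L).symm)
    obtain ⟨l, hl, rfl⟩ := exists_coe_eq_of_map_eq_coe f hL
    exact ⟨a :: l, by rw [← Multiset.cons_coe, hl, Multiset.cons_erase ha], rfl⟩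

namespace Finset

variable {α β : Type*} [DecidableEq β] (C : Finset α)

theorem count_map_val (f : α → β) (b : β) : (C.val.map f).count b = #{t ∈ C | f t = b} := by
  rw [Multiset.count_map, card_def, filter_val]
  exact congrArg Multiset.card (Multiset.filter_congr fun _ _ => eq_comm)

theorem map_val_eq_nsmul_univ [Fintype β] {f : α → β} {k : ℕ}
    (h : ∀ b, #{t ∈ C | f t = b} = k) : C.val.map f = k • (univ : Finset β).val :=
  Multiset.ext.2 fun b => by simp [count_map_val, h]

theorem map_val_eq_map_val {f g : α → β}
    (h : ∀ b, #{t ∈ C | f t = b} = #{t ∈ C | g t = b}) : C.val.map f = C.val.map g :=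
  Multiset.ext.2 fun b => by rw [count_map_val, count_map_val, h]

end Finset

/-- The pair `(x, g)` is the edge `x → g * x` labelled `g`; the multiset of edges is balanced
when every vertex is the tail of as many edges as it is the head of. -/
def IsBalanced {G : Type*} [Mul G] (E : Multiset (G × G)) : Prop :=
  E.map Prod.fst = E.map fun e => e.2 * e.1

namespace IsBalanced

variable {G : Type*} {E : Multiset (G × G)} {x g : G}

theorem of_cons_of_mul_eq [Mul G] (h : IsBalanced ((x, g) ::ₘ E)) (hx : g * x = x) :
    IsBalanced E := by
  unfold IsBalanced at h
  rw [Multiset.map_cons, Multiset.map_cons, hx] at h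
  exact (Multiset.cons_inj_right x).1 h

theorem exists_next [Mul G] (h : IsBalanced ((x, g) ::ₘ E)) (hx : g * x ≠ x) :
    ∃ g', (g * x, g') ∈ E := by
  have hmem : g * x ∈ ((x, g) ::ₘ E).map Prod.fst := by
    rw [h]; exact Multiset.mem_map_of_mem _ (Multiset.mem_cons_self _ _)
  obtain ⟨⟨y, g'⟩, hy, rfl⟩ := Multiset.mem_map.1 hmem
  rcases Multiset.mem_cons.1 hy with hy | hy
  · exact absurd (congrArg Prod.fst hy) hx
  · exact ⟨g', hy⟩

theorem merge [Semigroup G] {g' : G} (h : IsBalanced ((x, g) ::ₘ (g * x, g') ::ₘ E)) :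
    IsBalanced ((x, g' * g) ::ₘ E) := by
  unfold IsBalanced at h ⊢
  simp only [Multiset.map_cons] at h ⊢
  rw [Multiset.cons_swap] at h
  rw [mul_assoc]
  exact (Multiset.cons_inj_right _).1 h

end IsBalanced

theorem IsBalanced.exists_list_prod_eq_one {G : Type*} [Group G] {E : Multiset (G × G)}
    (hE : IsBalanced E) : ∃ L : List G, (L : Multiset G) = E.map Prod.snd ∧ L.prod = 1 := by
  induction hn : E.card using Nat.strong_induction_on generalizing E with
  | _ n ih =>
  rcases E.empty_or_exists_mem with rfl | ⟨⟨x, g⟩, he⟩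
  · exact ⟨[], by simp, by simp⟩
  obtain ⟨E, rfl⟩ := Multiset.exists_cons_of_mem he
  by_cases hx : g * x = x
  · obtain ⟨L, hL, hprod⟩ := ih _ (by simp [← hn]) (hE.of_cons_of_mul_eq hx) rfl
    refine ⟨g :: L, by rw [← Multiset.cons_coe, hL, Multiset.map_cons], ?_⟩
    simp [hprod, mul_eq_right.1 hx]
  · -- fuse the edge with one leaving its head; the fused label splits back into two factors
    obtain ⟨g', hg'⟩ := hE.exists_next hx
    obtain ⟨E, rfl⟩ := Multiset.exists_cons_of_mem hg'
    obtain ⟨L, hL, hprod⟩ := ih _ (by simp [← hn]) hE.merge rfl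
    obtain ⟨L', hL', hprod'⟩ :=
      List.exists_coe_eq_cons_cons_prod_eq (hL.trans (Multiset.map_cons _ _ _))
    exact ⟨L', by simp [hL', Multiset.cons_swap], hprod'.trans hprod⟩

section AssocRel

variable {Q : Type*} [Mul Q]

theorem assocRel_refl (x : Q) : assocRel x x := fun _ hr _ _ => hr.refl x

theorem assocRel_symm {x y : Q} (h : assocRel x y) : assocRel y x :=
  fun r hr hm ha => hr.symm (h r hr hm ha)

theorem assocRel_trans {x y z : Q} (h₁ : assocRel x y) (h₂ : assocRel y z) : assocRel x z :=
  fun r hr hm ha => hr.trans (h₁ r hr hm ha) (h₂ r hr hm ha)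

theorem assocRel_mul {a b c d : Q} (h₁ : assocRel a b) (h₂ : assocRel c d) :
    assocRel (a * c) (b * d) :=
  fun r hr hm ha => hm _ _ _ _ (h₁ r hr hm ha) (h₂ r hr hm ha)

theorem assocRel_assoc (a b c : Q) : assocRel (a * b * c) (a * (b * c)) :=
  fun _ _ _ ha => ha a b c

def assocSetoid (Q : Type*) [Mul Q] : Setoid Q :=
  ⟨assocRel, ⟨assocRel_refl, assocRel_symm, assocRel_trans⟩⟩

/-- `Q / A(Q)`. -/
def AssocQuotient (Q : Type*) [Mul Q] : Type _ := Quotient (assocSetoid Q)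

end AssocRel

namespace AssocQuotient

section Mul

variable {Q : Type*} [Mul Q]

def mk (a : Q) : AssocQuotient Q := Quotient.mk (assocSetoid Q) a

instance : Mul (AssocQuotient Q) :=
  ⟨Quotient.map₂ (· * ·) fun _ _ h₁ _ _ h₂ => assocRel_mul h₁ h₂⟩

theorem mk_mul (a b : Q) : mk (a * b) = mk a * mk b := rfl

theorem assocRel_of_mk_eq {x y : Q} (h : mk x = mk y) : assocRel x y := Quotient.exact h

@[elab_as_elim]
theorem ind {p : AssocQuotient Q → Prop} (h : ∀ a : Q, p (mk a)) (g : AssocQuotient Q) : p g :=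
  Quotient.ind h g

theorem mul_assoc' (g h i : AssocQuotient Q) : g * h * i = g * (h * i) := by
  induction g using ind; induction h using ind; induction i using ind
  exact Quotient.sound (assocRel_assoc _ _ _)

end Mul

variable {Q : Type*} [Loop Q]

instance : One (AssocQuotient Q) := ⟨mk 1⟩

theorem exists_mul_eq_one (g : AssocQuotient Q) : ∃ h, g * h = 1 := by
  induction g using ind with | h a => ?_
  obtain ⟨b, hb⟩ := (Loop.mulLeft_bijective a).2 1
  exact ⟨mk b, congrArg mk hb⟩

noncomputable instance : Inv (AssocQuotient Q) := ⟨fun g => (exists_mul_eq_one g).choose⟩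

noncomputable instance : Group (AssocQuotient Q) :=
  Group.ofRightAxioms mul_assoc' (ind fun a => congrArg mk (Loop.mul_one a))
    fun g => (exists_mul_eq_one g).choose_spec

theorem mk_foldl (l : List Q) (x : Q) :
    mk (l.foldl (· * ·) x) = mk x * (l.map mk).prod := by
  induction l generalizing x with
  | nil => simp
  | cons b l ih => simp [ih, mk_mul, mul_assoc]

end AssocQuotient

theorem IsProdOf.foldl {Q : Type*} [Mul Q] {s : Multiset Q} {x : Q} (h : IsProdOf s x)
    (l : List Q) : IsProdOf (s + (l : Multiset Q)) (l.foldl (· * ·) x) := by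
  induction l generalizing s x with
  | nil => simpa using h
  | cons b l ih =>
    rw [← Multiset.cons_coe, ← Multiset.singleton_add, ← add_assoc]
    exact ih (h.mul (.single b))

section Plex

open AssocQuotient

variable {Q : Type*} [Loop Q]

theorem isBalanced_of_cols_eq_entries {C : Multiset (Q × Q × Q)}
    (htable : ∀ t ∈ C, t.2.2 = t.1 * t.2.1) (hC : C.map (·.2.1) = C.map (·.2.2)) :
    IsBalanced (C.map fun t => (mk t.2.1, mk t.1)) := by
  unfold IsBalanced
  rw [Multiset.map_map, Multiset.map_map]
  calc C.map (fun t => mk t.2.1) = (C.map (·.2.1)).map mk := (Multiset.map_map _ _ _).symm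
    _ = (C.map (·.2.2)).map mk := by rw [hC]
    _ = C.map fun t => mk t.1 * mk t.2.1 := by
      rw [Multiset.map_map]
      exact Multiset.map_congr rfl fun t ht => by simp [htable t ht, mk_mul]

theorem exists_mem_fullProds_mk_eq_prod [Fintype Q] {k : ℕ} (hk : 1 ≤ k) (l : List Q)
    (hl : (l : Multiset Q) = k • (Finset.univ : Finset Q).val) :
    ∃ x ∈ fullProds Q k, mk x = (l.map mk).prod := by
  match l, hl with
  | [], hl =>
    have : (1 : Q) ∈ k • (Finset.univ : Finset Q).val :=
      Multiset.mem_nsmul.2 ⟨by omega, Finset.mem_univ_val 1⟩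
    simp [← hl] at this
  | a :: l, hl =>
    refine ⟨l.foldl (· * ·) a, ?_, by simp [mk_foldl]⟩
    have h := (IsProdOf.single a).foldl l
    rwa [Multiset.singleton_add, Multiset.cons_coe, hl] at h

end Plex

theorem kplex_full_kprod_mem_associator (Q : Type*) [Loop Q] [Fintype Q]
    [DecidableEq Q] (k : ℕ) (hk : 1 ≤ k) (C : Finset (Q × Q × Q))
    (htable : ∀ t ∈ C, t.2.2 = t.1 * t.2.1)
    (hplex :
      -- C is a k-plex …
      ((∀ s : Q, (C.filter fun t => t.1 = s).card = k) ∧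
       (∀ s : Q, (C.filter fun t => t.2.1 = s).card = k) ∧
       (∀ s : Q, (C.filter fun t => t.2.2 = s).card = k)) ∨
      -- … or just a regular row k-plex
      ((∀ s : Q, (C.filter fun t => t.1 = s).card = k) ∧
       (∀ s : Q, (C.filter fun t => t.2.1 = s).card
               = (C.filter fun t => t.2.2 = s).card))) :
    ∃ x : Q, x ∈ fullProds Q k ∧ assocRel x 1 := by
  have hrows : C.val.map (·.1) = k • (Finset.univ : Finset Q).val :=
    C.map_val_eq_nsmul_univ (by rcases hplex with ⟨h, -, -⟩ | ⟨h, -⟩ <;> exact h)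
  have hcols : C.val.map (·.2.1) = C.val.map (·.2.2) := by
    refine C.map_val_eq_map_val ?_
    rcases hplex with ⟨-, hcol, hent⟩ | ⟨-, h⟩
    exacts [fun s => (hcol s).trans (hent s).symm, h]
  obtain ⟨L, hL, hprod⟩ :=
    (isBalanced_of_cols_eq_entries htable hcols).exists_list_prod_eq_one
  have hlabels : (k • (Finset.univ : Finset Q).val).map AssocQuotient.mk = L := by
    rw [hL, ← hrows, Multiset.map_map, Multiset.map_map]; rfl
  obtain ⟨l, hl, rfl⟩ := Multiset.exists_coe_eq_of_map_eq_coe _ hlabels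
  obtain ⟨x, hx, hmk⟩ := exists_mem_fullProds_mk_eq_prod hk l hl
  exact ⟨x, hx, AssocQuotient.assocRel_of_mk_eq (hmk.trans hprod)⟩
end

section
/- Let G be a finite group and g₁, …, g_k ∈ G with g₁⋯g_k = 1 such that no proper contiguous (cyclic-interval) subproduct g_{i+1}⋯g_j equals 1. Then the set C = {(g_i, h_i, h_{i-1}) : 1 ≤ i ≤ k}, where h_i = g_{i+1}⋯g_k and h_0 = h_k = 1, is a column-entry regular subset of the multiplication table of G whose rows are exactly g₁, …, g_k and in which no column value repeats. -/
/-- Dénes–Keedwell-style construction: from a sequence `g₁, …, g_k` with product `1`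
and no proper contiguous subproduct equal to `1`, the cells `(gᵢ, hᵢ, hᵢ₋₁)`
(where `hᵢ = gᵢ₊₁ ⋯ g_k`) form a column-entry regular subset of the multiplication
table of `G` whose rows are exactly `g₁, …, g_k` and whose columns are pairwise distinct. -/
theorem regular_set_from_product_one (G : Type*) [Group G] [Fintype G]
    (l : List G) (hprod : l.prod = 1)
    (hmin : ∀ l₁ l₂ l₃ : List G, l = l₁ ++ l₂ ++ l₃ → l₂.prod = 1 → l₂ = [] ∨ l₂ = l) :
    -- the triple in row `gᵢ` is `(gᵢ, hᵢ, hᵢ₋₁)`, a cell of the multiplication table: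
    (∀ j : Fin l.length,
        (l.drop (j : ℕ)).prod = l.get j * (l.drop ((j : ℕ) + 1)).prod) ∧
    -- the rows of the selected cells are exactly `g₁, …, g_k`:
    (List.ofFn fun j : Fin l.length => l.get j) = l ∧
    -- no column value is selected twice:
    Function.Injective (fun j : Fin l.length => (l.drop ((j : ℕ) + 1)).prod) ∧
    -- column-entry regular: each element occurs as a column as often as as an entry:
    (↑(List.ofFn fun j : Fin l.length => (l.drop ((j : ℕ) + 1)).prod) : Multiset G)
      = ↑(List.ofFn fun j : Fin l.length => (l.drop (j : ℕ)).prod) := by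
  set k := l.length with hk
  refine ⟨fun j => ?_, List.ofFn_get l, ?_, ?_⟩
  · rw [List.drop_eq_getElem_cons j.2, List.prod_cons, List.get_eq_getElem]
  · -- injectivity
    have key : ∀ i j : Fin k, (i : ℕ) < (j : ℕ) →
        (l.drop ((i : ℕ) + 1)).prod = (l.drop ((j : ℕ) + 1)).prod → False := by
      intro i j hij heq
      set a := (i : ℕ) + 1
      set b := (j : ℕ) + 1
      have hab : a < b := by omega
      have hbk : b ≤ k := j.2
      have hdd : (l.drop a).drop (b - a) = l.drop b := by
        rw [List.drop_drop]
        congr 1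
        omega
      have hsplit : l = l.take a ++ (l.drop a).take (b - a) ++ l.drop b := by
        calc l = l.take a ++ l.drop a := (List.take_append_drop _ _).symm
          _ = l.take a ++ ((l.drop a).take (b - a) ++ (l.drop a).drop (b - a)) := by
              congr 1
              exact (List.take_append_drop _ _).symm
          _ = l.take a ++ (l.drop a).take (b - a) ++ l.drop b := by
              rw [hdd, List.append_assoc]
      have hmid : ((l.drop a).take (b - a)).prod = 1 := by
        have h1 : (l.drop a).prod = ((l.drop a).take (b - a)).prod * (l.drop b).prod := by
          conv_lhs => rw [← List.take_append_drop (b - a) (l.drop a)]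
          rw [List.prod_append, hdd]
        have h2 : ((l.drop a).take (b - a)).prod * (l.drop b).prod
            = 1 * (l.drop b).prod := by rw [one_mul, ← h1, heq]
        exact mul_right_cancel h2
      rcases hmin _ _ _ hsplit hmid with h | h
      · have : ((l.drop a).take (b - a)).length = 0 := by rw [h]; rfl
        rw [List.length_take, List.length_drop] at this
        omega
      · have : ((l.drop a).take (b - a)).length = k := by rw [h]
        rw [List.length_take, List.length_drop] at this
        have ha : 1 ≤ a := by omega
        omega
    intro i j heq
    simp only at heq
    rcases lt_trichotomy (i : ℕ) (j : ℕ) with h | h | h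
    · exact absurd heq (fun he => key i j h he)
    · exact Fin.ext h
    · exact absurd heq.symm (fun he => key j i h he)
  · -- multiset equality via rotation
    have hrot : (List.ofFn fun j : Fin k => (l.drop ((j : ℕ) + 1)).prod)
        = (List.ofFn fun j : Fin k => (l.drop (j : ℕ)).prod).rotate 1 := by
      apply List.ext_getElem
      · simp
      · intro n h1 h2
        rw [List.getElem_ofFn, List.getElem_rotate]
        simp only [List.length_ofFn] at h2 ⊢
        rw [List.getElem_ofFn]
        simp only
        have hn : n < k := by simpa using h1
        rcases Nat.lt_or_ge (n + 1) k with h | h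
        · rw [Nat.mod_eq_of_lt (by simpa using h)]
        · have hnk : n + 1 = k := by omega
          rw [hnk, Nat.mod_self, List.drop_zero, hprod, hk, List.drop_length, List.prod_nil]
    rw [hrot]
    exact Quot.sound (List.rotate_perm _ 1)
end

section
/- A finite group G of order n has a regular row transversal if and only if G can be partitioned into n pairwise disjoint regular row transversals. -/
/-- A regular row transversal of the multiplication table of `G`: one cell
from each row, such that each element of `G` occurs as a column (second
coordinate) exactly as often as it occurs as an entry (third coordinate). -/
def IsRegRowTransversal (G : Type*) [Group G] [DecidableEq G]
    (C : Finset (G × G × G)) : Prop :=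
  (∀ t ∈ C, t.2.2 = t.1 * t.2.1) ∧
  (∀ g : G, (C.filter fun t => t.1 = g).card = 1) ∧
  (∀ g : G, (C.filter fun t => t.2.1 = g).card = (C.filter fun t => t.2.2 = g).card)

theorem regRowTransversal_iff_partition (G : Type*) [Group G] [Fintype G]
    [DecidableEq G] :
    (∃ C : Finset (G × G × G), IsRegRowTransversal G C) ↔
    (∃ T : G → Finset (G × G × G),
      (∀ g : G, IsRegRowTransversal G (T g)) ∧
      (Pairwise fun g h : G => Disjoint (T g) (T h)) ∧
      (∀ t : G × G × G, t.2.2 = t.1 * t.2.1 → ∃ g : G, t ∈ T g)) := by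
  constructor
  · rintro ⟨C, hC1, hC2, hC3⟩
    have hinj : ∀ g : G, Function.Injective
        (fun t : G × G × G => (t.1, t.2.1 * g, t.2.2 * g)) := by
      intro g ⟨a1, a2, a3⟩ ⟨b1, b2, b3⟩ h
      simp only [Prod.mk.injEq, mul_left_inj] at h
      simp [Prod.ext_iff, h.1, h.2.1, h.2.2]
    refine ⟨fun g => C.image fun t => (t.1, t.2.1 * g, t.2.2 * g), ?_, ?_, ?_⟩
    · intro g
      refine ⟨?_, ?_, ?_⟩
      · intro t ht
        simp only [Finset.mem_image] at ht
        obtain ⟨s, hs, rfl⟩ := ht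
        simp [hC1 s hs, mul_assoc]
      · intro a
        rw [Finset.filter_image, Finset.card_image_of_injective _ (hinj g)]
        exact hC2 a
      · intro a
        rw [Finset.filter_image, Finset.filter_image,
          Finset.card_image_of_injective _ (hinj g),
          Finset.card_image_of_injective _ (hinj g)]
        have e1 : (C.filter fun t => (t.2.1 * g : G) = a)
            = C.filter fun t => t.2.1 = a * g⁻¹ := by
          apply Finset.filter_congr
          intro t _
          simp [eq_mul_inv_iff_mul_eq]
        have e2 : (C.filter fun t => (t.2.2 * g : G) = a)
            = C.filter fun t => t.2.2 = a * g⁻¹ := by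
          apply Finset.filter_congr
          intro t _
          simp [eq_mul_inv_iff_mul_eq]
        simpa [e1, e2] using hC3 (a * g⁻¹)
    · intro g h hgh
      rw [Finset.disjoint_left]
      rintro t ht1 ht2
      simp only [Finset.mem_image] at ht1 ht2
      obtain ⟨s, hs, rfl⟩ := ht1
      obtain ⟨u, hu, he⟩ := ht2
      simp only [Prod.mk.injEq] at he
      obtain ⟨he1, he2, -⟩ := he
      obtain ⟨b, hb⟩ := Finset.card_eq_one.mp (hC2 s.1)
      have hs' : s ∈ C.filter fun t => t.1 = s.1 := by simp [hs]
      have hu' : u ∈ C.filter fun t => t.1 = s.1 := by simp [hu, he1]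
      rw [hb, Finset.mem_singleton] at hs' hu'
      have : u = s := hu'.trans hs'.symm
      subst this
      exact hgh (mul_left_cancel he2).symm
    · intro t ht
      obtain ⟨b, hb⟩ := Finset.card_eq_one.mp (hC2 t.1)
      have hbm : b ∈ C.filter fun s => s.1 = t.1 := hb ▸ Finset.mem_singleton_self b
      rw [Finset.mem_filter] at hbm
      refine ⟨b.2.1⁻¹ * t.2.1, ?_⟩
      simp only [Finset.mem_image]
      refine ⟨b, hbm.1, ?_⟩
      have h3 := hC1 b hbm.1
      have : b.2.2 * (b.2.1⁻¹ * t.2.1) = t.2.2 := by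
        rw [h3, ht, hbm.2, mul_assoc, mul_inv_cancel_left]
      simp [Prod.ext_iff, hbm.2, this, mul_inv_cancel_left]
  · rintro ⟨T, hT, -, -⟩
    exact ⟨T 1, hT 1⟩
end

section
/- A finite group G has a regular row transversal if and only if 1 ∈ P(G), i.e., there is an ordering g₁, …, g_n of all elements of G with g₁⋯g_n = 1. -/
theorem Finset.card_filter_eq_count_map {α β : Type*} [DecidableEq β] (s : Finset α)
    (f : α → β) (b : β) : (s.filter fun a => f a = b).card = (s.val.map f).count b := by
  rw [Multiset.count_map, Finset.card_def, Finset.filter_val]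
  exact congrArg _ (Multiset.filter_congr fun _ _ => eq_comm)

theorem isRegRowTransversal_iff {G : Type*} [Group G] [Fintype G] [DecidableEq G]
    (C : Finset (G × G × G)) :
    IsRegRowTransversal G C ↔ (∀ t ∈ C, t.2.2 = t.1 * t.2.1) ∧
      C.val.map Prod.fst = Finset.univ.val ∧
      C.val.map (fun t => t.2.1) = C.val.map (fun t => t.2.2) := by
  simp only [IsRegRowTransversal, Finset.card_filter_eq_count_map, Multiset.ext,
    Multiset.count_univ]

section

variable {G : Type*} [Group G]

def HasOrderingWithProdOne (s : Multiset G) : Prop :=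
  ∃ l : List G, (↑l : Multiset G) = s ∧ l.prod = 1

namespace HasOrderingWithProdOne

theorem cons_one {s : Multiset G} (hs : HasOrderingWithProdOne s) :
    HasOrderingWithProdOne (1 ::ₘ s) := by
  obtain ⟨l, rfl, hl⟩ := hs
  exact ⟨1 :: l, rfl, by simp [hl]⟩

theorem split {x y : G} {s : Multiset G} (hs : HasOrderingWithProdOne ((x * y) ::ₘ s)) :
    HasOrderingWithProdOne (x ::ₘ y ::ₘ s) := by
  obtain ⟨l, hl, hprod⟩ := hs
  obtain ⟨l₁, l₂, rfl⟩ :=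
    List.append_of_mem (Multiset.mem_coe.1 (hl ▸ Multiset.mem_cons_self _ _))
  have coe_middle (a : G) (l : List G) :
      (↑(l₁ ++ a :: l) : Multiset G) = a ::ₘ ↑(l₁ ++ l) :=
    Multiset.coe_eq_coe.2 List.perm_middle
  refine ⟨l₁ ++ x :: y :: l₂, ?_, by simpa [mul_assoc] using hprod⟩
  rw [coe_middle, coe_middle, (Multiset.cons_inj_right _).1 ((coe_middle _ _).symm.trans hl)]

end HasOrderingWithProdOne

theorem hasOrderingWithProdOne_map_of_map_fst_eq_map_snd (m : Multiset (G × G))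
    (hm : m.map Prod.fst = m.map Prod.snd) :
    HasOrderingWithProdOne (m.map fun e => e.2 * e.1⁻¹) := by
  induction h : Multiset.card m generalizing m with
  | zero => exact ⟨[], by simp [Multiset.card_eq_zero.1 h], rfl⟩
  | succ n ih =>
    obtain ⟨⟨u, v⟩, hmem⟩ := Multiset.card_pos_iff_exists_mem.1 (by rw [h]; exact n.succ_pos)
    obtain ⟨t, rfl⟩ := Multiset.exists_cons_of_mem hmem
    by_cases huv : u = v
    · subst huv
      simp only [Multiset.map_cons, Multiset.cons_inj_right] at hm
      simpa using (ih t hm (by simpa using h)).cons_one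
    · have hv : v ∈ t.map Prod.fst := by
        have : v ∈ ((u, v) ::ₘ t).map Prod.fst :=
          hm ▸ Multiset.mem_map_of_mem _ (Multiset.mem_cons_self _ _)
        simpa [Ne.symm huv] using this
      obtain ⟨w, hvw⟩ : ∃ w, (v, w) ∈ t := by simpa using hv
      obtain ⟨r, rfl⟩ := Multiset.exists_cons_of_mem hvw
      have hbal : ((u, w) ::ₘ r).map Prod.fst = ((u, w) ::ₘ r).map Prod.snd := by
        simp only [Multiset.map_cons] at hm ⊢
        rwa [Multiset.cons_swap u, Multiset.cons_inj_right] at hm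
      have hcontract := ih _ hbal (by simpa using h)
      rw [Multiset.map_cons, show w * u⁻¹ = w * v⁻¹ * (v * u⁻¹) by group] at hcontract
      rw [Multiset.map_cons, Multiset.map_cons, Multiset.cons_swap]
      exact hcontract.split

def rowCells : G → List G → List (G × G × G)
  | _, [] => []
  | p, x :: xs => (x, (p * x)⁻¹, p⁻¹) :: rowCells (p * x) xs

theorem map_fst_rowCells (p : G) (l : List G) : (rowCells p l).map Prod.fst = l := by
  induction l generalizing p with
  | nil => rfl
  | cons x xs ih => simp [rowCells, ih]

theorem mem_rowCells_entry {p : G} {l : List G} {t : G × G × G} (ht : t ∈ rowCells p l) :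
    t.2.2 = t.1 * t.2.1 := by
  induction l generalizing p with
  | nil => simp [rowCells] at ht
  | cons x xs ih =>
    rcases List.mem_cons.1 ht with rfl | ht
    · simp [← mul_assoc]
    · exact ih ht

theorem map_entry_rowCells_append (p : G) (l : List G) :
    (rowCells p l).map (fun t => t.2.2) ++ [(p * l.prod)⁻¹] =
      p⁻¹ :: (rowCells p l).map (fun t => t.2.1) := by
  induction l generalizing p with
  | nil => simp [rowCells]
  | cons x xs ih =>
    simp only [rowCells, List.map_cons, List.cons_append, List.prod_cons, ← mul_assoc, ih]

theorem map_column_rowCells_perm {l : List G} (hl : l.prod = 1) :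
    ((rowCells 1 l).map fun t => t.2.1).Perm ((rowCells 1 l).map fun t => t.2.2) := by
  have h := map_entry_rowCells_append 1 l
  rw [hl, one_mul, inv_one] at h
  refine (List.perm_cons 1).1 ?_
  rw [← h]
  exact List.perm_append_singleton 1 _

end

theorem regRowTransversal_iff_one_full_product (G : Type*) [Group G] [Fintype G]
    [DecidableEq G] :
    (∃ C : Finset (G × G × G), IsRegRowTransversal G C) ↔
    (∃ l : List G, (↑l : Multiset G) = (Finset.univ : Finset G).val ∧ l.prod = 1) := by
  simp only [isRegRowTransversal_iff]
  constructor
  · rintro ⟨C, hentry, hrows, hbal⟩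
    have hlabels : (C.val.map fun t => (t.2.1, t.2.2)).map (fun e => e.2 * e.1⁻¹) =
        Finset.univ.val := by
      rw [Multiset.map_map, ← hrows]
      exact Multiset.map_congr rfl fun t ht => by simp [hentry t ht]
    have h := hasOrderingWithProdOne_map_of_map_fst_eq_map_snd (C.val.map fun t => (t.2.1, t.2.2))
      (by simpa only [Multiset.map_map, Function.comp_def] using hbal)
    rwa [hlabels] at h
  · rintro ⟨l, hl, hprod⟩
    have hfst : (↑(rowCells 1 l) : Multiset (G × G × G)).map Prod.fst = Finset.univ.val := by
      rw [Multiset.map_coe, map_fst_rowCells, hl]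
    refine ⟨⟨rowCells 1 l, .of_map _ (hfst ▸ Finset.univ.nodup)⟩,
      fun t ht => mem_rowCells_entry ht, hfst, ?_⟩
    simpa only [Multiset.map_coe, Multiset.coe_eq_coe] using map_column_rowCells_perm hprod
end

section
/- Let Q be a finite loop. If P^ω = ⋃_{i≥1} P^i(Q) is a normal subloop of Q, then the quotient Q/P^ω is an abelian group, hence Q' ⊆ P^ω; consequently P^ω = Q' or P^ω = Q' ∪ aQ' with a² ∈ Q'. -/
/-- `P^ω(Q) = ⋃_{i ≥ 1} P^i(Q)`. -/
def fullProdsOmega (Q : Type*) [Mul Q] [Fintype Q] : Set Q :=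
  {x | ∃ k : ℕ, 1 ≤ k ∧ x ∈ fullProds Q k}

/-!
Modulo `c`, two products of the same multiset of factors agree: completing both by a common
factor gives two elements of some `P^k ⊆ P^ω = ker c`, and the common factor cancels because
right translations permute the finite quotient `Q / c`. Hence `Q / c` is an abelian group and
`Q' ⊆ P^ω`. In the abelian group `Q / Q'` every element of `P^k` maps to `g ^ k`, where `g` is
the image of the product of all elements of `Q`, and `g ^ 2 = 1` because `Q` can be paired off
with right inverses. So `P^ω = Q' ∪ uQ'` for any `u ∈ P^1`, and `u ^ 2 ∈ Q'`.
-/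

section

variable {Q : Type*}

lemma exists_isProdOf_of_ne_zero [Mul Q] {s : Multiset Q} (hs : s ≠ 0) : ∃ x, IsProdOf s x := by
  induction s using Multiset.induction with
  | empty => exact absurd rfl hs
  | cons a t ih =>
    rcases eq_or_ne t 0 with rfl | ht
    · exact ⟨a, .single a⟩
    · obtain ⟨y, hy⟩ := ih ht
      exact ⟨a * y, Multiset.singleton_add a t ▸ .mul (.single a) hy⟩

lemma mul_mem_fullProds [Mul Q] [Fintype Q] {j k : ℕ} {x y : Q}
    (hx : x ∈ fullProds Q j) (hy : y ∈ fullProds Q k) : x * y ∈ fullProds Q (j + k) := by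
  show IsProdOf _ _
  rw [add_nsmul]
  exact .mul hx hy

lemma fullProds_nonempty [Mul Q] [Fintype Q] [Nonempty Q] {k : ℕ} (hk : k ≠ 0) :
    (fullProds Q k).Nonempty :=
  exists_isProdOf_of_ne_zero (by simp [hk, Finset.univ_nonempty.ne_empty])

lemma le_card_nsmul_univ [Fintype Q] (s : Multiset Q) :
    s ≤ Multiset.card s • (Finset.univ : Finset Q).val := by
  classical
  exact Multiset.le_iff_count.mpr fun a => by
    simpa [Multiset.count_nsmul] using Multiset.count_le_card a s

namespace LoopCongruence

variable [Loop Q] (c : LoopCongruence Q)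

lemma rel_of_mul_right_rel [Finite Q] {x y w : Q} (h : c.r (x * w) (y * w)) : c.r x y := by
  let S : Setoid Q := ⟨c.r, c.iseqv⟩
  let f : Quotient S → Quotient S :=
    Quotient.map (· * w) fun _ _ hab => c.mul_compat _ _ _ _ hab (c.iseqv.refl w)
  have hf : f.Surjective := by
    rintro ⟨z⟩
    obtain ⟨x, rfl⟩ := (Loop.mulRight_bijective w).surjective z
    exact ⟨⟦x⟧, rfl⟩
  exact Quotient.exact (Finite.injective_iff_surjective.mpr hf (Quotient.sound h :
    f ⟦x⟧ = f ⟦y⟧))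

variable [Fintype Q]

lemma rel_of_isProdOf (hker : ∀ x ∈ fullProdsOmega Q, c.r x 1) {s : Multiset Q} {x y : Q}
    (hx : IsProdOf s x) (hy : IsProdOf s y) : c.r x y := by
  classical
  set v := (Finset.univ : Finset Q).val
  set t := v + (Multiset.card s • v - s)
  have hst : s + t = (Multiset.card s + 1) • v := by
    rw [add_left_comm, add_tsub_cancel_of_le (le_card_nsmul_univ s), succ_nsmul']
  obtain ⟨w, hw⟩ :=
    exists_isProdOf_of_ne_zero (s := t) (by simp [t, v, Finset.univ_nonempty.ne_empty])
  have hmem (z : Q) (hz : IsProdOf s z) : c.r (z * w) 1 := by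
    refine hker _ ⟨_, Nat.le_add_left 1 (Multiset.card s), ?_⟩
    show IsProdOf _ _
    rw [← hst]
    exact .mul hz hw
  exact c.rel_of_mul_right_rel (c.iseqv.trans (hmem x hx) (c.iseqv.symm (hmem y hy)))

lemma rel_mul_assoc (hker : ∀ x ∈ fullProdsOmega Q, c.r x 1) (a b d : Q) :
    c.r ((a * b) * d) (a * (b * d)) := by
  refine c.rel_of_isProdOf hker (.mul (.mul (.single a) (.single b)) (.single d)) ?_
  rw [add_assoc]
  exact .mul (.single a) (.mul (.single b) (.single d))

lemma rel_mul_comm (hker : ∀ x ∈ fullProdsOmega Q, c.r x 1) (a b : Q) :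
    c.r (a * b) (b * a) := by
  refine c.rel_of_isProdOf hker (.mul (.single a) (.single b)) ?_
  rw [add_comm]
  exact .mul (.single b) (.single a)

end LoopCongruence

def commCon (Q : Type*) [Mul Q] : Con Q where
  r := commRel
  iseqv :=
    { refl := fun x _ hr _ _ _ => hr.refl x
      symm := fun h r hr hm ha hc => hr.symm (h r hr hm ha hc)
      trans := fun h₁ h₂ r hr hm ha hc => hr.trans (h₁ r hr hm ha hc) (h₂ r hr hm ha hc) }
  mul' := fun h₁ h₂ r hr hm ha hc => hm _ _ _ _ (h₁ r hr hm ha hc) (h₂ r hr hm ha hc)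

namespace commCon

instance [Loop Q] : CommMonoid (commCon Q).Quotient where
  one_mul := by rintro ⟨a⟩; exact congrArg _ (Loop.one_mul a)
  mul_one := by rintro ⟨a⟩; exact congrArg _ (Loop.mul_one a)
  mul_assoc := by rintro ⟨a⟩ ⟨b⟩ ⟨d⟩; exact Quot.sound fun _ _ _ ha _ => ha a b d
  mul_comm := by rintro ⟨a⟩ ⟨b⟩; exact Quot.sound fun _ _ _ _ hc => hc a b

variable [Loop Q]

lemma _root_.IsProdOf.coe_commCon {s : Multiset Q} {x : Q} (h : IsProdOf s x) :
    (x : (commCon Q).Quotient) = (s.map (↑)).prod := by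
  induction h with
  | single a => simp
  | mul _ _ iha ihb => simp [Multiset.map_add, Multiset.prod_add, ← iha, ← ihb]

variable [Fintype Q]

lemma coe_eq_pow_of_mem_fullProds {k : ℕ} {x : Q} (hx : x ∈ fullProds Q k) :
    (x : (commCon Q).Quotient) = (∏ q : Q, (q : (commCon Q).Quotient)) ^ k := by
  rw [IsProdOf.coe_commCon hx, Multiset.map_nsmul, Multiset.prod_nsmul]
  rfl

lemma prod_univ_sq : (∏ q : Q, (q : (commCon Q).Quotient)) ^ 2 = 1 := by
  choose ρ hρ using fun q : Q => (Loop.mulLeft_bijective q).surjective 1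
  have hρ_bij : ρ.Bijective := Finite.injective_iff_bijective.mp fun q₁ q₂ h =>
    (Loop.mulRight_bijective (ρ q₁)).injective ((hρ q₁).trans (h ▸ hρ q₂).symm)
  rw [sq]
  nth_rw 2 [← Fintype.prod_bijective ρ hρ_bij _ _ fun _ => rfl]
  rw [← Finset.prod_mul_distrib]
  exact Finset.prod_eq_one fun q _ => congrArg _ (hρ q)

end commCon

section

variable [Loop Q] [Fintype Q]

lemma commRel_one_of_mem_fullProds_of_even {k : ℕ} {x : Q} (hk : Even k)
    (hx : x ∈ fullProds Q k) : commRel x 1 :=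
  (commCon Q).eq.mp <| by
    obtain ⟨m, rfl⟩ := hk.two_dvd
    rw [commCon.coe_eq_pow_of_mem_fullProds hx, pow_mul, commCon.prod_univ_sq, one_pow]
    rfl

lemma commRel_of_mem_fullProds_of_odd {k : ℕ} {x u : Q} (hk : Odd k)
    (hx : x ∈ fullProds Q k) (hu : u ∈ fullProds Q 1) : commRel x u :=
  (commCon Q).eq.mp <| by
    obtain ⟨m, rfl⟩ := hk
    rw [commCon.coe_eq_pow_of_mem_fullProds hx, commCon.coe_eq_pow_of_mem_fullProds hu,
      pow_succ, pow_mul, commCon.prod_univ_sq, one_pow, one_mul, pow_one]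

lemma fullProdsOmega_subset_commRel {u : Q} (hu : u ∈ fullProds Q 1) :
    fullProdsOmega Q ⊆ {x | commRel x 1} ∪ {x | commRel x u} := by
  rintro x ⟨k, -, hx⟩
  rcases Nat.even_or_odd k with hk | hk
  · exact .inl (commRel_one_of_mem_fullProds_of_even hk hx)
  · exact .inr (commRel_of_mem_fullProds_of_odd hk hx hu)

end

end

/-- If `P^ω` is a normal subloop (i.e. the class of `1` of some congruence `c`),
then the quotient `Q/P^ω` is an abelian group (associativity and commutativity
hold modulo `c`), hence `Q' ⊆ P^ω`; consequently `P^ω = Q'` or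
`P^ω = Q' ∪ aQ'` with `a² ∈ Q'`. -/
theorem fullProdsOmega_normal_consequences (Q : Type*) [Loop Q] [Fintype Q]
    (c : LoopCongruence Q) (hN : {x : Q | c.r x 1} = fullProdsOmega Q) :
    (∀ a b d : Q, c.r ((a * b) * d) (a * (b * d))) ∧
    (∀ a b : Q, c.r (a * b) (b * a)) ∧
    ({x : Q | commRel x 1} ⊆ fullProdsOmega Q) ∧
    (fullProdsOmega Q = {x : Q | commRel x 1} ∨
      ∃ a : Q, commRel (a * a) 1 ∧
        fullProdsOmega Q = {x : Q | commRel x 1} ∪ {x : Q | commRel x a}) := by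
  have hker : ∀ x ∈ fullProdsOmega Q, c.r x 1 := fun x hx => (hN ▸ hx : x ∈ {x | c.r x 1})
  have hassoc := c.rel_mul_assoc hker
  have hcomm := c.rel_mul_comm hker
  have hQ' {x y : Q} (h : commRel x y) : c.r x y := h c.r c.iseqv c.mul_compat hassoc hcomm
  have hsub : {x : Q | commRel x 1} ⊆ fullProdsOmega Q := fun x hx => hN ▸ hQ' hx
  obtain ⟨u, hu⟩ := fullProds_nonempty (Q := Q) one_ne_zero
  have huu : commRel (u * u) 1 :=
    commRel_one_of_mem_fullProds_of_even ⟨1, rfl⟩ (mul_mem_fullProds hu hu)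
  have hcoset : {x : Q | commRel x u} ⊆ fullProdsOmega Q := fun x hx =>
    hN ▸ c.iseqv.trans (hQ' hx) (hker u ⟨1, le_rfl, hu⟩)
  exact ⟨hassoc, hcomm, hsub, .inr ⟨u, huu,
    (fullProdsOmega_subset_commRel hu).antisymm (Set.union_subset hsub hcoset)⟩⟩
end
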